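/- arXiv:1811.11099 — 2 statements merged into one kernel-verified Lean document; each statement's English description precedes it below -/
import Mathlib

section
/- Let α > 2, s > 0, σ > 0. Let Y be a random vector in ℝ² with i.i.d. centered Gaussian coordinates of variance σ², and let G be an exponential random variable with mean 1, independent of Y. Then ∫_{ℝ²} E[1 − exp(−s·G·‖x + Y‖^{−α})] dx = π·s^{2/α}·Γ(1 + 2/α)·Γ(1 − 2/α), where Γ denotes the Gamma function; in particular, the value does not depend on σ. -/
open MeasureTheory ProbabilityTheory Real

/-!
Fix `ω`. Translating `x` by `Y ω` removes `Y` altogether, and the remaining integral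
`∫_{ℝ²} (1 - exp (-c ‖x‖ ^ (-α))) dx`, `c = s G ω`, is computed by the layer-cake formula
with weight `e^{-t}`: the superlevel set `{c ‖x‖ ^ (-α) > t}` is a ball of radius
`(c / t) ^ (1 / α)`, so the integral equals
`π ∫₀^∞ e^{-t} (c / t) ^ (2 / α) dt = π c ^ (2 / α) Γ(1 - 2 / α)`. By Tonelli it remains to
average `G ^ (2 / α)`, and the tail formula gives `E[G ^ (2 / α)] = Γ(1 + 2 / α)` for `G ~ Exp(1)`.
-/

open Set Metric Module
open scoped ENNReal

theorem lintegral_Ioi_exp_neg_mul_rpow_eq_Gamma {a : ℝ} (ha : 0 < a) :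
    ∫⁻ t in Ioi (0 : ℝ), ENNReal.ofReal (exp (-t) * t ^ (a - 1)) = ENNReal.ofReal (Gamma a) := by
  rw [Gamma_eq_integral ha, ofReal_integral_eq_lintegral_ofReal (GammaIntegral_convergent ha)]
  filter_upwards [ae_restrict_mem measurableSet_Ioi] with t (ht : 0 < t)
  positivity

theorem setOf_lt_mul_norm_rpow_neg {E : Type*} [NormedAddCommGroup E] {c t α : ℝ} (hc : 0 ≤ c)
    (ht : 0 < t) (hα : 0 < α) :
    {x : E | t < c * ‖x‖ ^ (-α)} = ball 0 ((c / t) ^ α⁻¹) \ {0} := by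
  ext x
  -- `0 ^ (-α) = 0` for real powers, hence the puncture
  rcases eq_or_ne x 0 with rfl | hx
  · simp [zero_rpow (neg_ne_zero.2 hα.ne'), ht.le]
  have hxpos : 0 < ‖x‖ := norm_pos_iff.2 hx
  simp only [mem_ofPred_eq, mem_sdiff, mem_ball_zero_iff, mem_singleton_iff, hx,
    not_false_eq_true, and_true]
  rw [rpow_neg hxpos.le, ← div_eq_mul_inv, lt_div_iff₀ (rpow_pos_of_pos hxpos α), mul_comm,
    ← lt_div_iff₀ ht, ← rpow_lt_rpow_iff hxpos.le (rpow_nonneg (div_nonneg hc ht.le) _) hα,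
    ← rpow_mul (div_nonneg hc ht.le), inv_mul_cancel₀ hα.ne', rpow_one]

section AddHaar

variable {E : Type*} [NormedAddCommGroup E] [NormedSpace ℝ E] [MeasurableSpace E] [BorelSpace E]
  [FiniteDimensional ℝ E] [Nontrivial E] (μ : Measure E) [μ.IsAddHaarMeasure]

theorem addHaar_setOf_lt_mul_norm_rpow_neg {c t α : ℝ} (hc : 0 ≤ c) (ht : 0 < t) (hα : 0 < α) :
    μ {x : E | t < c * ‖x‖ ^ (-α)} =
      ENNReal.ofReal ((c / t) ^ (finrank ℝ E / α)) * μ (ball 0 1) := by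
  rw [setOf_lt_mul_norm_rpow_neg hc ht hα, measure_sdiff_null (measure_singleton 0),
    Measure.addHaar_ball μ 0 (rpow_nonneg (div_nonneg hc ht.le) _), ← rpow_natCast,
    ← rpow_mul (div_nonneg hc ht.le), inv_mul_eq_div]

theorem lintegral_one_sub_exp_neg_mul_norm_rpow_neg {c α : ℝ} (hc : 0 ≤ c)
    (hα : (finrank ℝ E : ℝ) < α) :
    ∫⁻ x, ENNReal.ofReal (1 - exp (-(c * ‖x‖ ^ (-α)))) ∂μ =
      ENNReal.ofReal (c ^ (finrank ℝ E / α) * Gamma (1 - finrank ℝ E / α)) * μ (ball 0 1) := by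
  set d : ℝ := (finrank ℝ E : ℝ)
  have hα0 : 0 < α := lt_of_le_of_lt (Nat.cast_nonneg _) hα
  have hd : d / α < 1 := (div_lt_one hα0).2 hα
  have hexp (x : ℝ) : ∫ t in (0 : ℝ)..x, exp (-t) = 1 - exp (-x) := by
    rw [intervalIntegral.integral_comp_neg (fun t => exp t), integral_exp, neg_zero, exp_zero]
  have layer_cake := lintegral_comp_eq_lintegral_meas_lt_mul μ
    (Filter.Eventually.of_forall fun x => by positivity)
    (by fun_prop : Measurable fun x : E => c * ‖x‖ ^ (-α)).aemeasurable
    (g := fun t => exp (-t))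
    (fun _ _ => (by fun_prop : Continuous fun t => exp (-t)).intervalIntegrable _ _)
    (Filter.Eventually.of_forall fun _ => (exp_pos _).le)
  simp only [hexp] at layer_cake
  have hpoint : ∀ t ∈ Ioi (0 : ℝ), μ {x : E | t < c * ‖x‖ ^ (-α)} * ENNReal.ofReal (exp (-t)) =
      ENNReal.ofReal (c ^ (d / α)) * ENNReal.ofReal (exp (-t) * t ^ ((1 - d / α) - 1)) *
        μ (ball 0 1) := by
    intro t (ht : 0 < t)
    rw [addHaar_setOf_lt_mul_norm_rpow_neg μ hc ht hα0, mul_right_comm,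
      ← ENNReal.ofReal_mul (by positivity), ← ENNReal.ofReal_mul (by positivity),
      div_rpow hc ht.le, sub_sub_cancel_left, rpow_neg ht.le]
    congr 2
    ring
  rw [layer_cake, setLIntegral_congr_fun measurableSet_Ioi hpoint,
    lintegral_mul_const' _ _ (measure_ball_lt_top (μ := μ)).ne,
    lintegral_const_mul' _ _ ENNReal.ofReal_ne_top,
    lintegral_Ioi_exp_neg_mul_rpow_eq_Gamma (by linarith), ← ENNReal.ofReal_mul (by positivity)]

end AddHaar

theorem ae_nonneg_of_exp_tail {Ω : Type*} [MeasurableSpace Ω] {μ : Measure Ω}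
    [IsProbabilityMeasure μ] {G : Ω → ℝ} (hG : Measurable G)
    (hG_tail : ∀ g : ℝ, 0 ≤ g → μ {ω | g ≤ G ω} = ENNReal.ofReal (exp (-g))) :
    ∀ᵐ ω ∂μ, 0 ≤ G ω := by
  rw [ae_iff_measure_eq (measurableSet_le measurable_const hG).nullMeasurableSet, hG_tail 0 le_rfl,
    measure_univ, neg_zero, exp_zero, ENNReal.ofReal_one]

theorem lintegral_rpow_of_exp_tail {Ω : Type*} [MeasurableSpace Ω] {μ : Measure Ω}
    [IsProbabilityMeasure μ] {G : Ω → ℝ} (hG : Measurable G)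
    (hG_tail : ∀ g : ℝ, 0 ≤ g → μ {ω | g ≤ G ω} = ENNReal.ofReal (exp (-g)))
    {p : ℝ} (hp : 0 < p) :
    ∫⁻ ω, ENNReal.ofReal (G ω ^ p) ∂μ = ENNReal.ofReal (Gamma (1 + p)) := by
  have hpoint : ∀ t ∈ Ioi (0 : ℝ), μ {ω | t ≤ G ω} * ENNReal.ofReal (t ^ (p - 1)) =
      ENNReal.ofReal (exp (-t) * t ^ (p - 1)) := by
    intro t (ht : 0 < t)
    rw [hG_tail t ht.le, ← ENNReal.ofReal_mul (exp_pos _).le]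
  rw [lintegral_rpow_eq_lintegral_meas_le_mul μ (ae_nonneg_of_exp_tail hG hG_tail)
      hG.aemeasurable hp, setLIntegral_congr_fun measurableSet_Ioi hpoint,
    lintegral_Ioi_exp_neg_mul_rpow_eq_Gamma hp, ← ENNReal.ofReal_mul hp.le, add_comm,
    Gamma_add_one hp.ne']

theorem integral_integral_eq_toReal_lintegral_lintegral_swap {α β : Type*} [MeasurableSpace α]
    [MeasurableSpace β] {μ : Measure α} {ν : Measure β} [SFinite μ] [SFinite ν]
    {f : α → β → ℝ} (hf : Measurable (Function.uncurry f)) (hf_nonneg : ∀ x, 0 ≤ᵐ[ν] f x)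
    (hf_fin : ∀ x, ∫⁻ y, ENNReal.ofReal (f x y) ∂ν ≠ ∞) :
    ∫ x, ∫ y, f x y ∂ν ∂μ = (∫⁻ y, ∫⁻ x, ENNReal.ofReal (f x y) ∂μ ∂ν).toReal := by
  have hF : Measurable (Function.uncurry fun x y => ENNReal.ofReal (f x y)) :=
    ENNReal.measurable_ofReal.comp hf
  have hL : Measurable fun x => ∫⁻ y, ENNReal.ofReal (f x y) ∂ν := hF.lintegral_prod_right'
  have inner (x : α) : ∫ y, f x y ∂ν = (∫⁻ y, ENNReal.ofReal (f x y) ∂ν).toReal :=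
    integral_eq_lintegral_of_nonneg_ae (hf_nonneg x)
      (hf.comp measurable_prodMk_left).aestronglyMeasurable
  rw [integral_congr_ae (Filter.Eventually.of_forall inner),
    integral_toReal hL.aemeasurable
      (Filter.Eventually.of_forall fun x => (hf_fin x).lt_top),
    lintegral_lintegral_swap hF.aemeasurable]

theorem lintegral_radial_real_prod_eq_complex (g : ℝ → ℝ≥0∞) (y : ℝ × ℝ) :
    ∫⁻ x : ℝ × ℝ, g √((x.1 + y.1) ^ 2 + (x.2 + y.2) ^ 2) = ∫⁻ z : ℂ, g ‖z‖ := by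
  refine (lintegral_add_right_eq_self (fun x : ℝ × ℝ => g √(x.1 ^ 2 + x.2 ^ 2)) y).trans ?_
  rw [← Complex.volume_preserving_equiv_real_prod.lintegral_comp_emb
      Complex.measurableEquivRealProd.measurableEmbedding]
  simp [Complex.norm_def, Complex.normSq_apply, sq]

theorem stmt_6_general {Ω : Type*} [MeasureSpace Ω] [IsProbabilityMeasure (ℙ : Measure Ω)]
    (α s : ℝ) (hα : 2 < α) (hs : 0 < s)
    (Y : Ω → ℝ × ℝ) (G : Ω → ℝ)
    (hYmeas : Measurable Y) (hGmeas : Measurable G)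
    (hGexp : ∀ g : ℝ, 0 ≤ g → ℙ {ω | g ≤ G ω} = ENNReal.ofReal (Real.exp (-g))) :
    ∫ x : ℝ × ℝ, ∫ ω, (1 - Real.exp (-(s * G ω *
        Real.sqrt ((x.1 + (Y ω).1) ^ 2 + (x.2 + (Y ω).2) ^ 2) ^ (-α))))
      = π * s ^ (2 / α) * Real.Gamma (1 + 2 / α) * Real.Gamma (1 - 2 / α) := by
  have hGnn := ae_nonneg_of_exp_tail hGmeas hGexp
  have hΓ₁ : 0 < Gamma (1 + 2 / α) := Gamma_pos_of_pos (by positivity)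
  have hΓ₂ : 0 < Gamma (1 - 2 / α) :=
    Gamma_pos_of_pos (by rw [sub_pos, div_lt_one] <;> linarith)
  have hterm_le (x : ℝ × ℝ) (ω : Ω) : ENNReal.ofReal (1 - exp (-(s * G ω *
      √((x.1 + (Y ω).1) ^ 2 + (x.2 + (Y ω).2) ^ 2) ^ (-α)))) ≤ 1 :=
    ENNReal.ofReal_le_one.2 (sub_le_self _ (exp_pos _).le)
  have hspatial : ∀ᵐ ω ∂(ℙ : Measure Ω), ∫⁻ x : ℝ × ℝ, ENNReal.ofReal (1 - exp (-(s * G ω *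
      √((x.1 + (Y ω).1) ^ 2 + (x.2 + (Y ω).2) ^ 2) ^ (-α)))) =
      ENNReal.ofReal (π * s ^ (2 / α) * Gamma (1 - 2 / α)) * ENNReal.ofReal (G ω ^ (2 / α)) := by
    filter_upwards [hGnn] with ω hω
    refine (lintegral_radial_real_prod_eq_complex
      (fun r => ENNReal.ofReal (1 - exp (-(s * G ω * r ^ (-α))))) (Y ω)).trans ?_
    rw [lintegral_one_sub_exp_neg_mul_norm_rpow_neg volume (mul_nonneg hs.le hω)
      (by simpa using hα), Complex.finrank_real_complex, Complex.volume_ball, Nat.cast_ofNat,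
      mul_rpow hs.le hω, ENNReal.ofReal_one, one_pow, one_mul, ← ENNReal.ofReal_coe_nnreal,
      NNReal.coe_real_pi,
      ← ENNReal.ofReal_mul (by positivity), ← ENNReal.ofReal_mul (by positivity)]
    congr 1
    ring
  rw [integral_integral_eq_toReal_lintegral_lintegral_swap (by fun_prop)
      (fun x => hGnn.mono fun ω hω => ?_)
      (fun x => ((lintegral_mono (hterm_le x)).trans_lt (by simp)).ne),
    lintegral_congr_ae hspatial, lintegral_const_mul' _ _ ENNReal.ofReal_ne_top,
    lintegral_rpow_of_exp_tail hGmeas hGexp (by positivity), ← ENNReal.ofReal_mul (by positivity),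
    ENNReal.toReal_ofReal (by positivity)]
  · ring
  · exact sub_nonneg.2 (exp_le_one_iff.2 (neg_nonpos.2 (by positivity)))

/-- Let `α > 2`, `s > 0`, `σ > 0`. Let `Y` be a random vector in `ℝ²` with i.i.d. centered
Gaussian coordinates of variance `σ²`, and `G` a unit-mean exponential random variable
independent of `Y`. Then
`∫_{ℝ²} E[1 − exp(−s·G·‖x + Y‖^{−α})] dx = π·s^{2/α}·Γ(1 + 2/α)·Γ(1 − 2/α)`;
in particular the value does not depend on `σ`. -/
theorem stmt_6 {Ω : Type*} [MeasureSpace Ω] [IsProbabilityMeasure (ℙ : Measure Ω)]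
    (α s σ : ℝ) (hα : 2 < α) (hs : 0 < s) (hσ : 0 < σ)
    (Y : Ω → ℝ × ℝ) (G : Ω → ℝ)
    (hYmeas : Measurable Y) (hGmeas : Measurable G)
    (hY1gauss : Measure.map (fun ω => (Y ω).1) ℙ = gaussianReal 0 ⟨σ ^ 2, sq_nonneg σ⟩)
    (hY2gauss : Measure.map (fun ω => (Y ω).2) ℙ = gaussianReal 0 ⟨σ ^ 2, sq_nonneg σ⟩)
    (hYindep : IndepFun (fun ω => (Y ω).1) (fun ω => (Y ω).2) ℙ)
    (hGexp : ∀ g : ℝ, 0 ≤ g → ℙ {ω | g ≤ G ω} = ENNReal.ofReal (Real.exp (-g)))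
    (hGYindep : IndepFun Y G ℙ) :
    ∫ x : ℝ × ℝ, ∫ ω, (1 - Real.exp (-(s * G ω *
        Real.sqrt ((x.1 + (Y ω).1) ^ 2 + (x.2 + (Y ω).2) ^ 2) ^ (-α))))
      = π * s ^ (2 / α) * Real.Gamma (1 + 2 / α) * Real.Gamma (1 - 2 / α) :=
  stmt_6_general α s hα hs Y G hYmeas hGmeas hGexp
end

section
/- Let α > 2, s > 0, σ > 0, n̄ > 0, λ_p > 0. Let Y be a random vector in ℝ² with i.i.d. centered Gaussian coordinates of variance σ², and for x ∈ ℝ² define ζ(x) = E[s/(‖x + Y‖^α + s)]. Then exp(−λ_p ∫_{ℝ²} (1 − exp(−n̄·ζ(x))) dx) ≥ exp(−π·n̄·λ_p·s^{2/α}·Γ(1 + 2/α)·Γ(1 − 2/α)). -/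
/-!
Since `1 - exp (-x) ≤ x`, the exponent on the left is at most `n̄ λ_p ∫ ζ`. By Fubini and the
translation invariance of Lebesgue measure, `∫ ζ = ∫ s / (‖x‖ ^ α + s) dx`. In polar coordinates,
writing `(r ^ α + s)⁻¹ = ∫₀^∞ exp (-(r ^ α + s) u) du` and swapping the integrals reduces this
to two Gamma integrals, which give `π s ^ (2 / α) Γ(1 + 2 / α) Γ(1 - 2 / α)`.
-/

open MeasureTheory ProbabilityTheory Real Set

theorem lintegral_rpow_mul_exp_neg_mul_rpow {p q b : ℝ} (hp : 0 < p) (hq : -1 < q) (hb : 0 < b) :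
    ∫⁻ x in Ioi (0 : ℝ), ENNReal.ofReal (x ^ q * exp (-b * x ^ p)) =
      ENNReal.ofReal (b ^ (-(q + 1) / p) * (1 / p) * Gamma ((q + 1) / p)) := by
  rw [← integral_rpow_mul_exp_neg_mul_rpow hp hq hb]
  refine (ofReal_integral_eq_lintegral_ofReal
    (integrableOn_rpow_mul_exp_neg_mul_rpow hq hp hb) ?_).symm
  filter_upwards [self_mem_ae_restrict measurableSet_Ioi] with x (hx : 0 < x)
  positivity

theorem ofReal_inv_eq_lintegral_exp_neg_mul {c : ℝ} (hc : 0 < c) :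
    ENNReal.ofReal c⁻¹ = ∫⁻ u in Ioi (0 : ℝ), ENNReal.ofReal (exp (-c * u)) := by
  simpa [rpow_neg_one] using (lintegral_rpow_mul_exp_neg_mul_rpow one_pos neg_one_lt_zero hc).symm

theorem lintegral_rpow_div_rpow_add {p α s : ℝ} (hp : -1 < p) (hpα : p + 1 < α) (hs : 0 < s) :
    ∫⁻ r in Ioi (0 : ℝ), ENNReal.ofReal (r ^ p / (r ^ α + s)) =
      ENNReal.ofReal (s ^ ((p + 1) / α - 1) / α * Gamma ((p + 1) / α) *
        Gamma (1 - (p + 1) / α)) := by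
  have hα : 0 < α := by linarith
  set β := (p + 1) / α
  have hβ0 : 0 < β := div_pos (by linarith) hα
  have hβ1 : β < 1 := (div_lt_one hα).2 hpα
  have hΓ : 0 < Gamma (1 - β) := Gamma_pos_of_pos (by linarith)
  calc ∫⁻ r in Ioi (0 : ℝ), ENNReal.ofReal (r ^ p / (r ^ α + s))
      = ∫⁻ r in Ioi (0 : ℝ), ∫⁻ u in Ioi (0 : ℝ),
          ENNReal.ofReal (exp (-s * u)) * ENNReal.ofReal (r ^ p * exp (-u * r ^ α)) := by
        refine setLIntegral_congr_fun measurableSet_Ioi fun r (hr : 0 < r) => ?_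
        rw [div_eq_mul_inv, ENNReal.ofReal_mul (by positivity),
          ofReal_inv_eq_lintegral_exp_neg_mul (by positivity),
          ← lintegral_const_mul' _ _ ENNReal.ofReal_ne_top]
        refine lintegral_congr fun u => ?_
        rw [← ENNReal.ofReal_mul (by positivity), ← ENNReal.ofReal_mul (by positivity),
          show -(r ^ α + s) * u = -s * u + -u * r ^ α by ring, exp_add]
        ring_nf
    _ = ∫⁻ u in Ioi (0 : ℝ), ∫⁻ r in Ioi (0 : ℝ),
          ENNReal.ofReal (exp (-s * u)) * ENNReal.ofReal (r ^ p * exp (-u * r ^ α)) :=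
        lintegral_lintegral_swap (by fun_prop)
    _ = ∫⁻ u in Ioi (0 : ℝ),
          ENNReal.ofReal (u ^ (-β) * exp (-s * u ^ (1 : ℝ))) * ENNReal.ofReal (Gamma β / α) := by
        refine setLIntegral_congr_fun measurableSet_Ioi fun u (hu : 0 < u) => ?_
        rw [lintegral_const_mul' _ _ ENNReal.ofReal_ne_top,
          lintegral_rpow_mul_exp_neg_mul_rpow hα hp hu, ← ENNReal.ofReal_mul (by positivity),
          ← ENNReal.ofReal_mul (by positivity)]
        congr 1
        rw [rpow_one, neg_div]
        ring
    _ = ENNReal.ofReal (s ^ (β - 1) / α * Gamma β * Gamma (1 - β)) := by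
        rw [lintegral_mul_const' _ _ ENNReal.ofReal_ne_top,
          lintegral_rpow_mul_exp_neg_mul_rpow one_pos (by linarith) hs,
          show -(-β + 1) / 1 = β - 1 by ring, show (-β + 1) / 1 = 1 - β by ring,
          ← ENNReal.ofReal_mul (by positivity)]
        ring_nf

theorem lintegral_comp_sqrt_sq_add_sq {g : ℝ → ENNReal} (hg : Measurable g) :
    ∫⁻ x : ℝ × ℝ, g √(x.1 ^ 2 + x.2 ^ 2) =
      ENNReal.ofReal (2 * π) * ∫⁻ r in Ioi (0 : ℝ), ENNReal.ofReal r * g r := by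
  have hsqrt : ∀ p ∈ Ioi (0 : ℝ) ×ˢ Ioo (-π) π, ENNReal.ofReal p.1 •
      g √((polarCoord.symm p).1 ^ 2 + (polarCoord.symm p).2 ^ 2) =
        ENNReal.ofReal p.1 * g p.1 * 1 := by
    rintro ⟨r, θ⟩ ⟨hr, -⟩
    simp only [polarCoord_symm_apply, mul_pow, ← mul_add, cos_sq_add_sin_sq, mul_one,
      sqrt_sq (le_of_lt hr), smul_eq_mul]
  rw [← lintegral_comp_polarCoord_symm, polarCoord_target,
    setLIntegral_congr_fun (measurableSet_Ioi.prod measurableSet_Ioo) hsqrt,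
    Measure.volume_eq_prod, ← Measure.prod_restrict,
    lintegral_prod_mul (f := fun r => ENNReal.ofReal r * g r) (g := fun _ => 1) (by fun_prop)
      aemeasurable_const]
  rw [lintegral_one, Measure.restrict_apply_univ, volume_Ioo, sub_neg_eq_add, ← two_mul,
    mul_comm]

section PlaneKernel

variable {α s : ℝ}

theorem lintegral_div_sqrt_rpow_add (hα : 2 < α) (hs : 0 < s) :
    ∫⁻ x : ℝ × ℝ, ENNReal.ofReal (s / (√(x.1 ^ 2 + x.2 ^ 2) ^ α + s)) =
      ENNReal.ofReal (π * s ^ (2 / α) * Gamma (1 + 2 / α) * Gamma (1 - 2 / α)) := by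
  have hα0 : 0 < α := by linarith
  have hradial : ∫⁻ r in Ioi (0 : ℝ), ENNReal.ofReal r * ENNReal.ofReal (s / (r ^ α + s)) =
      ENNReal.ofReal s * ∫⁻ r in Ioi (0 : ℝ), ENNReal.ofReal (r ^ (1 : ℝ) / (r ^ α + s)) := by
    rw [← lintegral_const_mul' _ _ ENNReal.ofReal_ne_top]
    refine setLIntegral_congr_fun measurableSet_Ioi fun r (hr : 0 < r) => ?_
    rw [← ENNReal.ofReal_mul hr.le, ← ENNReal.ofReal_mul hs.le, rpow_one, mul_div, mul_div,
      mul_comm]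
  rw [lintegral_comp_sqrt_sq_add_sq (g := fun r => ENNReal.ofReal (s / (r ^ α + s)))
      (by fun_prop), hradial, lintegral_rpow_div_rpow_add (by norm_num) (by linarith) hs]
  have hΓ : 0 < Gamma (1 - 2 / α) := Gamma_pos_of_pos (by rw [sub_pos, div_lt_one hα0]; exact hα)
  rw [← ENNReal.ofReal_mul hs.le, ← ENNReal.ofReal_mul (by positivity)]
  congr 1
  rw [one_add_one_eq_two, add_comm 1, Gamma_add_one (by positivity), rpow_sub_one hs.ne']
  field_simp

theorem integrable_div_sqrt_rpow_add (hα : 2 < α) (hs : 0 < s) :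
    Integrable fun x : ℝ × ℝ => s / (√(x.1 ^ 2 + x.2 ^ 2) ^ α + s) := by
  refine (lintegral_ofReal_ne_top_iff_integrable (by fun_prop : Measurable _).aestronglyMeasurable
    (ae_of_all _ fun x => by positivity)).1 ?_
  rw [lintegral_div_sqrt_rpow_add hα hs]
  exact ENNReal.ofReal_ne_top

theorem integral_div_sqrt_rpow_add (hα : 2 < α) (hs : 0 < s) :
    ∫ x : ℝ × ℝ, s / (√(x.1 ^ 2 + x.2 ^ 2) ^ α + s) =
      π * s ^ (2 / α) * Gamma (1 + 2 / α) * Gamma (1 - 2 / α) := by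
  have hΓ : 0 < Gamma (1 - 2 / α) := Gamma_pos_of_pos (by
    rw [sub_pos, div_lt_one (by linarith)]; exact hα)
  rw [integral_eq_lintegral_of_nonneg_ae (ae_of_all _ fun x => by positivity)
    (by fun_prop : Measurable _).aestronglyMeasurable, lintegral_div_sqrt_rpow_add hα hs,
    ENNReal.toReal_ofReal (by positivity)]

end PlaneKernel

section TranslateAverage

variable {G Ω E : Type*} [MeasurableSpace G] [AddGroup G] [MeasurableAdd₂ G] {μ : Measure G}
  [SFinite μ] [μ.IsAddRightInvariant] [MeasurableSpace Ω] {P : Measure Ω}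
  [NormedAddCommGroup E] {f : G → E} {Y : Ω → G}

theorem integrable_prod_comp_add [IsFiniteMeasure P] (hf : StronglyMeasurable f)
    (hfi : Integrable f μ) (hY : Measurable Y) :
    Integrable (fun p : G × Ω => f (p.1 + Y p.2)) (μ.prod P) := by
  refine (integrable_prod_iff' ?_).2 ⟨ae_of_all _ fun ω => hfi.comp_add_right (Y ω), ?_⟩
  · exact (hf.comp_measurable (measurable_fst.add (hY.comp measurable_snd))).aestronglyMeasurable
  · simp_rw [integral_add_right_eq_self (fun x => ‖f x‖)]
    exact integrable_const _

theorem integral_integral_comp_add [IsProbabilityMeasure P] [NormedSpace ℝ E]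
    [CompleteSpace E] (hf : StronglyMeasurable f) (hfi : Integrable f μ)
    (hY : Measurable Y) : ∫ x, ∫ ω, f (x + Y ω) ∂P ∂μ = ∫ x, f x ∂μ := by
  rw [integral_integral_swap (integrable_prod_comp_add hf hfi hY)]
  simp_rw [integral_add_right_eq_self f]
  simp

end TranslateAverage

theorem integral_one_sub_exp_neg_mul_le {X : Type*} [MeasurableSpace X] {μ : Measure X}
    {g : X → ℝ} {c : ℝ} (hc : 0 ≤ c) (hg : 0 ≤ g) (hgi : Integrable g μ) :
    ∫ x, (1 - exp (-(c * g x))) ∂μ ≤ c * ∫ x, g x ∂μ := by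
  rw [← integral_const_mul]
  refine integral_mono_of_nonneg (ae_of_all _ fun x => ?_) (hgi.const_mul c)
    (ae_of_all _ fun x => ?_)
  · simpa using exp_le_one_iff.2 (neg_nonpos.2 (mul_nonneg hc (hg x)))
  · linarith [add_one_le_exp (-(c * g x))]

theorem stmt_7_general {Ω : Type*} [MeasureSpace Ω] [IsProbabilityMeasure (ℙ : Measure Ω)]
    (α s nbar lam_p : ℝ) (hα : 2 < α) (hs : 0 < s)
    (hnbar : 0 < nbar) (hlam_p : 0 < lam_p)
    (Y : Ω → ℝ × ℝ) (hYmeas : Measurable Y)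
    (ζ : ℝ × ℝ → ℝ)
    (hζ : ∀ x : ℝ × ℝ, ζ x = ∫ ω, s /
      (Real.sqrt ((x.1 + (Y ω).1) ^ 2 + (x.2 + (Y ω).2) ^ 2) ^ α + s)) :
    Real.exp (-(lam_p * ∫ x : ℝ × ℝ, (1 - Real.exp (-(nbar * ζ x)))))
      ≥ Real.exp (-(π * nbar * lam_p * s ^ (2 / α) *
          Real.Gamma (1 + 2 / α) * Real.Gamma (1 - 2 / α))) := by
  set f : ℝ × ℝ → ℝ := fun x => s / (√(x.1 ^ 2 + x.2 ^ 2) ^ α + s)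
  have hf : StronglyMeasurable f := (by fun_prop : Measurable f).stronglyMeasurable
  have hfi : Integrable f := integrable_div_sqrt_rpow_add hα hs
  obtain rfl : ζ = fun x => ∫ ω, f (x + Y ω) := funext hζ
  have hζi : Integrable fun x => ∫ ω, f (x + Y ω) :=
    (integrable_prod_comp_add hf hfi hYmeas).integral_prod_left
  have hbound := integral_one_sub_exp_neg_mul_le hnbar.le
    (fun x => integral_nonneg fun ω => by positivity) hζi
  rw [integral_integral_comp_add hf hfi hYmeas, integral_div_sqrt_rpow_add hα hs] at hbound
  rw [ge_iff_le, exp_le_exp, neg_le_neg_iff]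
  calc lam_p * ∫ x, (1 - exp (-(nbar * ∫ ω, f (x + Y ω))))
      ≤ lam_p * (nbar * (π * s ^ (2 / α) * Gamma (1 + 2 / α) * Gamma (1 - 2 / α))) :=
        mul_le_mul_of_nonneg_left hbound hlam_p.le
    _ = _ := by ring

/-- Proposition 1 / Remark 1: with `α > 2`, `s > 0`, `σ > 0`, `n̄ > 0`, `λ_p > 0`, `Y` a
random vector in `ℝ²` with i.i.d. centered Gaussian coordinates of variance `σ²`, and
`ζ(x) = E[s/(‖x + Y‖^α + s)]`, the exact conditional Laplace transform of the
Thomas-cluster-process interference is bounded below by the PPP one of density `n̄·λ_p`: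
`exp(−λ_p ∫_{ℝ²} (1 − exp(−n̄·ζ(x))) dx) ≥ exp(−π·n̄·λ_p·s^{2/α}·Γ(1+2/α)·Γ(1−2/α))`. -/
theorem stmt_7 {Ω : Type*} [MeasureSpace Ω] [IsProbabilityMeasure (ℙ : Measure Ω)]
    (α s σ nbar lam_p : ℝ) (hα : 2 < α) (hs : 0 < s) (hσ : 0 < σ)
    (hnbar : 0 < nbar) (hlam_p : 0 < lam_p)
    (Y : Ω → ℝ × ℝ) (hYmeas : Measurable Y)
    (hY1gauss : Measure.map (fun ω => (Y ω).1) ℙ = gaussianReal 0 ⟨σ ^ 2, sq_nonneg σ⟩)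
    (hY2gauss : Measure.map (fun ω => (Y ω).2) ℙ = gaussianReal 0 ⟨σ ^ 2, sq_nonneg σ⟩)
    (hYindep : IndepFun (fun ω => (Y ω).1) (fun ω => (Y ω).2) ℙ)
    (ζ : ℝ × ℝ → ℝ)
    (hζ : ∀ x : ℝ × ℝ, ζ x = ∫ ω, s /
      (Real.sqrt ((x.1 + (Y ω).1) ^ 2 + (x.2 + (Y ω).2) ^ 2) ^ α + s)) :
    Real.exp (-(lam_p * ∫ x : ℝ × ℝ, (1 - Real.exp (-(nbar * ζ x)))))
      ≥ Real.exp (-(π * nbar * lam_p * s ^ (2 / α) *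
          Real.Gamma (1 + 2 / α) * Real.Gamma (1 - 2 / α))) :=
  stmt_7_general α s nbar lam_p hα hs hnbar hlam_p Y hYmeas ζ hζ
end
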